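/- Let A⁺ be the Moore–Penrose inverse formula (I − J/(n+1)) G₂ (I − J/(n+1)) + (x − 𝟏/2)(x − 𝟏/2)ᵀ with J = 𝟏𝟏ᵀ. Under the standing assumptions, A⁺A = I − 𝟏𝟏ᵀ/(n+1), the orthogonal projection onto the orthogonal complement of span(𝟏). -/

import Mathlib

open Matrix

noncomputable section

def onesVec (n : ℕ) : Fin (n+1) → ℝ := fun _ => 1

def gridVec (n : ℕ) : Fin (n+1) → ℝ := fun i => (i : ℝ) / n

def eL (n : ℕ) : Fin (n+1) → ℝ := fun i => if i.1 = 0 then 1 else 0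

def eR (n : ℕ) : Fin (n+1) → ℝ := fun i => if i.1 = n then 1 else 0

def interiorEmb (n : ℕ) : Fin (n-1) → Fin (n+1) :=
  fun i => ⟨i.1 + 1, by have := i.isLt; omega⟩

def centralBlock (n : ℕ) (A : Matrix (Fin (n+1)) (Fin (n+1)) ℝ) :
    Matrix (Fin (n-1)) (Fin (n-1)) ℝ :=
  A.submatrix (interiorEmb n) (interiorEmb n)

def pad (n : ℕ) (B : Matrix (Fin (n-1)) (Fin (n-1)) ℝ) :
    Matrix (Fin (n+1)) (Fin (n+1)) ℝ :=
  fun i j =>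
    if hi : 0 < i.1 ∧ i.1 < n then
      if hj : 0 < j.1 ∧ j.1 < n then
        B ⟨i.1 - 1, by omega⟩ ⟨j.1 - 1, by omega⟩
      else 0
    else 0

def G2 (n : ℕ) (A : Matrix (Fin (n+1)) (Fin (n+1)) ℝ) :
    Matrix (Fin (n+1)) (Fin (n+1)) ℝ :=
  pad n (centralBlock n A)⁻¹

def Aplus (n : ℕ) (A : Matrix (Fin (n+1)) (Fin (n+1)) ℝ) :
    Matrix (Fin (n+1)) (Fin (n+1)) ℝ :=
  (1 - ((n : ℝ) + 1)⁻¹ • vecMulVec (onesVec n) (onesVec n)) * G2 n A *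
      (1 - ((n : ℝ) + 1)⁻¹ • vecMulVec (onesVec n) (onesVec n)) +
    vecMulVec (gridVec n - (1/2 : ℝ) • onesVec n)
      (gridVec n - (1/2 : ℝ) • onesVec n)

/-!
It suffices that both sides agree on `𝟏`, on `x`, and on every vector `u` vanishing at both
endpoints, since these span `ℝⁿ⁺¹`. Write `P = I - J/(n+1)` and `w = x - 𝟏/2`, so that
`A⁺ y = P G₂ P y + ⟨w, y⟩ w`. On `𝟏` both sides vanish. Since `A x = e_R - e_L` has zero sum,
vanishes on the interior and pairs with `w` to `1`, we get `A⁺ A x = w = P x`. For `u`,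
symmetry of `A` makes `A u` orthogonal to `𝟏` and to `w` (as `A w = e_R - e_L`), and writing
`G₂ = E Ā⁻¹ Eᵀ` with `E` the extension by zero from the interior, so that `Ā = Eᵀ A E`,
gives `G₂ A u = u`.
-/

section ExtensionByZero

variable {ι κ : Type*} (R : Type*) [DecidableEq ι] [CommRing R]

def embMatrix (e : κ → ι) : Matrix ι κ R := (1 : Matrix ι ι R).submatrix id e

variable {R}

lemma embMatrix_apply_self [DecidableEq κ] {e : κ → ι} (he : Function.Injective e) (k : κ) :
    embMatrix R e (e k) = Pi.single k 1 := by
  ext l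
  simp only [embMatrix, submatrix_apply, id, one_apply, he.eq_iff, Pi.single_apply, eq_comm]

lemma embMatrix_apply_eq_zero {e : κ → ι} {i : ι} (hi : i ∉ Set.range e) :
    embMatrix R e i = 0 := by
  ext k
  simp only [embMatrix, submatrix_apply, id, one_apply, Pi.zero_apply]
  exact if_neg fun h => hi ⟨k, h.symm⟩

lemma embMatrix_mulVec_comp [Fintype κ] {e : κ → ι} (he : Function.Injective e) {u : ι → R}
    (hu : ∀ i ∉ Set.range e, u i = 0) : embMatrix R e *ᵥ (u ∘ e) = u := by
  classical
  ext i
  by_cases hi : i ∈ Set.range e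
  · obtain ⟨k, rfl⟩ := hi
    rw [mulVec, embMatrix_apply_self he, single_dotProduct, one_mul, Function.comp_apply]
  · rw [mulVec, embMatrix_apply_eq_zero hi, zero_dotProduct, hu i hi]

lemma transpose_embMatrix_mulVec [Fintype ι] (e : κ → ι) (y : ι → R) :
    (embMatrix R e)ᵀ *ᵥ y = y ∘ e := by
  ext k
  simp [embMatrix, mulVec, dotProduct, one_apply]

lemma transpose_embMatrix_mul_mul_embMatrix [Fintype ι] (e : κ → ι) (A : Matrix ι ι R) :
    (embMatrix R e)ᵀ * A * embMatrix R e = A.submatrix e e := by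
  ext k l
  simp [embMatrix, mul_apply, one_apply]

lemma embMatrix_mul_mul_transpose_apply [Fintype κ] {e : κ → ι} (he : Function.Injective e)
    (M : Matrix κ κ R) (k l : κ) :
    (embMatrix R e * M * (embMatrix R e)ᵀ) (e k) (e l) = M k l := by
  classical
  rw [Matrix.mul_assoc, mul_apply', embMatrix_apply_self he, single_dotProduct, one_mul,
    mul_apply']
  simp only [transpose_apply]
  rw [embMatrix_apply_self he, dotProduct_single, mul_one]

lemma embMatrix_mul_mul_transpose_apply_of_notMem_range [Fintype κ] {e : κ → ι}
    (M : Matrix κ κ R) {i j : ι} (hij : i ∉ Set.range e ∨ j ∉ Set.range e) :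
    (embMatrix R e * M * (embMatrix R e)ᵀ) i j = 0 := by
  rcases hij with hi | hj
  · rw [Matrix.mul_assoc, mul_apply', embMatrix_apply_eq_zero hi, zero_dotProduct]
  · rw [mul_apply']
    simp only [transpose_apply]
    rw [embMatrix_apply_eq_zero hj, dotProduct_zero]

lemma embMatrix_mul_inv_mul_transpose_mulVec_mulVec [Fintype ι] [Fintype κ] [DecidableEq κ]
    {e : κ → ι} (he : Function.Injective e) (A : Matrix ι ι R)
    (hA : IsUnit (A.submatrix e e).det) {u : ι → R} (hu : ∀ i ∉ Set.range e, u i = 0) :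
    (embMatrix R e * (A.submatrix e e)⁻¹ * (embMatrix R e)ᵀ) *ᵥ (A *ᵥ u) = u := by
  calc (embMatrix R e * (A.submatrix e e)⁻¹ * (embMatrix R e)ᵀ) *ᵥ (A *ᵥ u)
      = (embMatrix R e * (A.submatrix e e)⁻¹ * ((embMatrix R e)ᵀ * A * embMatrix R e)) *ᵥ
          (u ∘ e) := by
        conv_lhs => rw [← embMatrix_mulVec_comp he hu]
        simp only [mulVec_mulVec, Matrix.mul_assoc]
    _ = embMatrix R e *ᵥ (u ∘ e) := by
        rw [transpose_embMatrix_mul_mul_embMatrix, Matrix.mul_assoc, nonsing_inv_mul _ hA,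
          Matrix.mul_one]
    _ = u := embMatrix_mulVec_comp he hu

end ExtensionByZero

lemma interiorEmb_injective (n : ℕ) : Function.Injective (interiorEmb n) := fun k l h => by
  simpa [interiorEmb, Fin.ext_iff] using h

lemma mem_range_interiorEmb {n : ℕ} {i : Fin (n+1)} :
    i ∈ Set.range (interiorEmb n) ↔ i ≠ 0 ∧ i ≠ Fin.last n := by
  simp only [Set.mem_range, ne_eq, Fin.ext_iff, Fin.val_zero, Fin.val_last, interiorEmb]
  constructor
  · rintro ⟨k, hk⟩
    have := k.isLt
    omega
  · intro hi
    exact ⟨⟨i - 1, by omega⟩, by simp only; omega⟩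

lemma pad_eq_embMatrix_mul_mul_transpose (n : ℕ) (B : Matrix (Fin (n-1)) (Fin (n-1)) ℝ) :
    pad n B = embMatrix ℝ (interiorEmb n) * B * (embMatrix ℝ (interiorEmb n))ᵀ := by
  ext i j
  by_cases hij : i ∈ Set.range (interiorEmb n) ∧ j ∈ Set.range (interiorEmb n)
  · obtain ⟨⟨k, rfl⟩, ⟨l, rfl⟩⟩ := hij
    rw [embMatrix_mul_mul_transpose_apply (interiorEmb_injective n)]
    have := k.isLt
    have := l.isLt
    simp only [pad]
    rw [dif_pos (by simp only [interiorEmb]; omega), dif_pos (by simp only [interiorEmb]; omega)]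
    rfl
  · rw [embMatrix_mul_mul_transpose_apply_of_notMem_range _ (not_and_or.1 hij)]
    simp only [pad, mem_range_interiorEmb, ne_eq, Fin.ext_iff, Fin.val_zero, Fin.val_last] at hij ⊢
    split_ifs <;> first | rfl | omega

lemma G2_eq (n : ℕ) (A : Matrix (Fin (n+1)) (Fin (n+1)) ℝ) :
    G2 n A = embMatrix ℝ (interiorEmb n) * (A.submatrix (interiorEmb n) (interiorEmb n))⁻¹ *
      (embMatrix ℝ (interiorEmb n))ᵀ :=
  pad_eq_embMatrix_mul_mul_transpose n _

lemma G2_mulVec_mulVec {n : ℕ} {A : Matrix (Fin (n+1)) (Fin (n+1)) ℝ}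
    (hinv : IsUnit (centralBlock n A).det) {u : Fin (n+1) → ℝ} (hu₀ : u 0 = 0)
    (huₙ : u (Fin.last n) = 0) : G2 n A *ᵥ (A *ᵥ u) = u := by
  rw [G2_eq]
  refine embMatrix_mul_inv_mul_transpose_mulVec_mulVec (interiorEmb_injective n) A hinv
    fun i hi => ?_
  rw [mem_range_interiorEmb, not_and_or, not_not, not_not] at hi
  rcases hi with rfl | rfl <;> assumption

lemma G2_mulVec_eq_zero {n : ℕ} (A : Matrix (Fin (n+1)) (Fin (n+1)) ℝ) {y : Fin (n+1) → ℝ}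
    (hy : ∀ k, y (interiorEmb n k) = 0) : G2 n A *ᵥ y = 0 := by
  rw [G2_eq, ← mulVec_mulVec, transpose_embMatrix_mulVec,
    show y ∘ interiorEmb n = 0 from funext hy, mulVec_zero]

lemma eR_eq_single (n : ℕ) : eR n = Pi.single (Fin.last n) 1 := by
  ext i
  simp [eR, Pi.single_apply, Fin.ext_iff]

lemma eL_eq_single (n : ℕ) : eL n = Pi.single 0 1 := by
  ext i
  simp only [eL, Pi.single_apply, Fin.ext_iff, Fin.val_zero]

lemma gridVec_zero (n : ℕ) : gridVec n 0 = 0 := by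
  simp [gridVec]

lemma gridVec_last {n : ℕ} (hn : n ≠ 0) : gridVec n (Fin.last n) = 1 := by
  simp [gridVec, hn]

lemma sum_gridVec {n : ℕ} (hn : n ≠ 0) : ∑ i, gridVec n i = (n + 1) / 2 := by
  have hgauss (m : ℕ) : (∑ i ∈ Finset.range (m + 1), (i : ℝ)) * 2 = ((m : ℝ) + 1) * m := by
    induction m with
    | zero => simp
    | succ m ih => rw [Finset.sum_range_succ, add_mul, ih]; push_cast; ring
  simp only [gridVec, ← Finset.sum_div, Fin.sum_univ_eq_sum_range (fun i => (i : ℝ)) (n + 1)]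
  field_simp
  linarith [hgauss n]

lemma one_sub_smul_vecMulVec_mulVec {ι R : Type*} [Fintype ι] [DecidableEq ι] [CommRing R]
    (c : R) (a y : ι → R) : (1 - c • vecMulVec a a) *ᵥ y = y - (c * (a ⬝ᵥ y)) • a := by
  rw [sub_mulVec, one_mulVec, smul_mulVec, vecMulVec_mulVec, op_smul_eq_smul, smul_smul]

def centering (n : ℕ) : Matrix (Fin (n+1)) (Fin (n+1)) ℝ :=
  1 - ((n : ℝ) + 1)⁻¹ • vecMulVec (onesVec n) (onesVec n)

def centeredGrid (n : ℕ) : Fin (n+1) → ℝ := gridVec n - (1/2 : ℝ) • onesVec n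

lemma centering_mulVec (n : ℕ) (y : Fin (n+1) → ℝ) :
    centering n *ᵥ y = y - (((n : ℝ) + 1)⁻¹ * ∑ i, y i) • onesVec n := by
  rw [centering, one_sub_smul_vecMulVec_mulVec, show onesVec n = 1 from rfl, one_dotProduct]

lemma centering_mulVec_of_sum_eq_zero {n : ℕ} {y : Fin (n+1) → ℝ} (hy : ∑ i, y i = 0) :
    centering n *ᵥ y = y := by
  rw [centering_mulVec, hy, mul_zero, zero_smul, sub_zero]

lemma centering_mulVec_onesVec (n : ℕ) : centering n *ᵥ onesVec n = 0 := by
  have hmean : ((n : ℝ) + 1)⁻¹ * ∑ i, onesVec n i = 1 := by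
    simp only [onesVec, Finset.sum_const, Finset.card_univ, Fintype.card_fin, nsmul_eq_mul,
      mul_one]
    push_cast
    field_simp
  rw [centering_mulVec, hmean, one_smul, sub_self]

lemma centering_mulVec_gridVec {n : ℕ} (hn : n ≠ 0) :
    centering n *ᵥ gridVec n = centeredGrid n := by
  rw [centering_mulVec, sum_gridVec hn, centeredGrid]
  congr 2
  field_simp

lemma Aplus_mulVec (n : ℕ) (A : Matrix (Fin (n+1)) (Fin (n+1)) ℝ) (y : Fin (n+1) → ℝ) :
    Aplus n A *ᵥ y =
      centering n *ᵥ (G2 n A *ᵥ (centering n *ᵥ y)) + (centeredGrid n ⬝ᵥ y) • centeredGrid n := by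
  rw [Aplus, add_mulVec, ← mulVec_mulVec, ← mulVec_mulVec, vecMulVec_mulVec, op_smul_eq_smul]
  rfl

lemma Aplus_mulVec_eR_sub_eL {n : ℕ} (hn : n ≠ 0) (A : Matrix (Fin (n+1)) (Fin (n+1)) ℝ) :
    Aplus n A *ᵥ (eR n - eL n) = centeredGrid n := by
  have hsum : ∑ i, (eR n - eL n) i = 0 := by
    simp [eR_eq_single, eL_eq_single, Finset.sum_sub_distrib]
  have hinterior : ∀ k, (eR n - eL n) (interiorEmb n k) = 0 := fun k => by
    have := k.isLt
    simp only [Pi.sub_apply, eR, eL, interiorEmb]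
    rw [if_neg (by omega), if_neg (by omega), sub_zero]
  have hdot : centeredGrid n ⬝ᵥ (eR n - eL n) = 1 := by
    simp [eR_eq_single, eL_eq_single, dotProduct_sub, centeredGrid, gridVec_last hn, gridVec_zero,
      onesVec]
  rw [Aplus_mulVec, centering_mulVec_of_sum_eq_zero hsum, G2_mulVec_eq_zero A hinterior,
    mulVec_zero, hdot, one_smul, zero_add]

lemma ext_of_mulVec_onesVec_gridVec {n : ℕ} (hn : n ≠ 0)
    {M N : Matrix (Fin (n+1)) (Fin (n+1)) ℝ}
    (hones : M *ᵥ onesVec n = N *ᵥ onesVec n) (hgrid : M *ᵥ gridVec n = N *ᵥ gridVec n)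
    (hbdry : ∀ u : Fin (n+1) → ℝ, u 0 = 0 → u (Fin.last n) = 0 → M *ᵥ u = N *ᵥ u) : M = N := by
  refine ext_iff_mulVec.2 fun v => ?_
  set u := v - v 0 • onesVec n - (v (Fin.last n) - v 0) • gridVec n
  have hv : v = u + v 0 • onesVec n + (v (Fin.last n) - v 0) • gridVec n := by
    simp only [u]; abel
  have hu : M *ᵥ u = N *ᵥ u :=
    hbdry u (by simp [u, onesVec, gridVec_zero]) (by simp [u, onesVec, gridVec_last hn])
  rw [hv, mulVec_add, mulVec_add, mulVec_add, mulVec_add, mulVec_smul, mulVec_smul, mulVec_smul,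
    mulVec_smul, hu, hones, hgrid]

theorem Aplus_mul_A_eq_proj
    (n : ℕ) (hn : 2 ≤ n) (A : Matrix (Fin (n+1)) (Fin (n+1)) ℝ)
    (hsym : A.IsSymm)
    (h1 : A *ᵥ onesVec n = 0)
    (hx : A *ᵥ gridVec n = eR n - eL n)
    (hinv : IsUnit (centralBlock n A).det) :
    Aplus n A * A = 1 - ((n : ℝ) + 1)⁻¹ • vecMulVec (onesVec n) (onesVec n) := by
  have hn₀ : n ≠ 0 := by omega
  have hA_dot (v u : Fin (n+1) → ℝ) : v ⬝ᵥ (A *ᵥ u) = (A *ᵥ v) ⬝ᵥ u := by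
    rw [dotProduct_mulVec, ← vecMul_transpose, hsym.eq]
  have hA_grid : A *ᵥ centeredGrid n = eR n - eL n := by
    rw [centeredGrid, mulVec_sub, mulVec_smul, h1, hx, smul_zero, sub_zero]
  refine ext_of_mulVec_onesVec_gridVec (M := Aplus n A * A) (N := centering n) hn₀
    ?_ ?_ fun u hu₀ huₙ => ?_ <;> rw [← mulVec_mulVec]
  · rw [h1, mulVec_zero, centering_mulVec_onesVec]
  · rw [hx, Aplus_mulVec_eR_sub_eL hn₀, centering_mulVec_gridVec hn₀]
  · have hsum : ∑ i, (A *ᵥ u) i = 0 := by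
      rw [← one_dotProduct, show (1 : Fin (n+1) → ℝ) = onesVec n from rfl, hA_dot, h1,
        zero_dotProduct]
    have hdot : centeredGrid n ⬝ᵥ (A *ᵥ u) = 0 := by
      rw [hA_dot, hA_grid, eR_eq_single, eL_eq_single, sub_dotProduct, single_dotProduct,
        single_dotProduct, huₙ, hu₀, sub_self]
    rw [Aplus_mulVec, centering_mulVec_of_sum_eq_zero hsum, G2_mulVec_mulVec hinv hu₀ huₙ, hdot,
      zero_smul, add_zero]
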